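/- arXiv:1406.1166 — 10 statements merged into one kernel-verified Lean document; each statement's English description precedes it below -/
import Mathlib

section
/- For all real n > 3 and all real x with 2π/(n+1) ≤ x < π/2, we have (cos x)^n < 1 - sin x. -/
/-!
Since `cos x ^ 2 = (1 - sin x) * (1 + sin x)`, the claim amounts to
`cos x ^ (n - 2) * (1 + sin x) < 1`. For `x > π / 3` this holds because `cos x < 1 / 2` and
`n - 2 ≥ 1`. For `x ≤ π / 3` the constraint `(n + 1) x ≥ 2π` forces `m = n - 2 ≥ 2` and
`m x ≥ π > 2`; then `x < tan x` gives `cos x ^ 2 < 1 / (1 + x ^ 2)`, and Bernoulli's inequality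
`(1 + x ^ 2) ^ (m / 2) ≥ 1 + m x ^ 2 / 2 ≥ 1 + x` beats `1 + sin x`.
-/

open Real

namespace Real

variable {x m : ℝ}

lemma one_add_sq_mul_cos_sq_lt_one (hx0 : 0 < x) (hx : x < π / 2) :
    (1 + x ^ 2) * cos x ^ 2 < 1 := by
  have hc : 0 < cos x := cos_pos_of_mem_Ioo ⟨by linarith, hx⟩
  have hxcos : x * cos x < sin x := by
    have := lt_tan hx0 hx
    rwa [tan_eq_sin_div_cos, lt_div_iff₀ hc] at this
  nlinarith [sin_sq_add_cos_sq x, mul_pos hx0 hc]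

lemma cos_rpow_mul_one_add_sin_lt_one_of_two_le_mul (hx0 : 0 < x) (hx : x < π / 2)
    (hm : 2 ≤ m) (hmx : 2 ≤ m * x) : cos x ^ m * (1 + sin x) < 1 := by
  have hc : 0 < cos x := cos_pos_of_mem_Ioo ⟨by linarith, hx⟩
  have hcos : cos x ^ m = (cos x ^ 2) ^ (m / 2) := by
    rw [← rpow_natCast, ← rpow_mul hc.le]
    ring_nf
  have hbernoulli : 1 + sin x < (1 + x ^ 2) ^ (m / 2) :=
    calc 1 + sin x < 1 + x := by linarith [sin_lt hx0]
      _ ≤ 1 + m / 2 * x ^ 2 := by nlinarith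
      _ ≤ (1 + x ^ 2) ^ (m / 2) :=
        one_add_mul_self_le_rpow_one_add (by linarith [sq_nonneg x]) (by linarith)
  calc cos x ^ m * (1 + sin x) < (cos x ^ 2) ^ (m / 2) * (1 + x ^ 2) ^ (m / 2) := by
        rw [hcos]
        exact mul_lt_mul_of_pos_left hbernoulli (by positivity)
    _ = ((1 + x ^ 2) * cos x ^ 2) ^ (m / 2) := by
        rw [mul_rpow (by positivity) (by positivity), mul_comm]
    _ < 1 := rpow_lt_one (by positivity) (one_add_sq_mul_cos_sq_lt_one hx0 hx) (by linarith)

lemma cos_rpow_mul_one_add_sin_lt_one_of_pi_div_three_lt (hx1 : π / 3 < x) (hx2 : x < π / 2)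
    (hm : 1 ≤ m) : cos x ^ m * (1 + sin x) < 1 := by
  have hc : 0 < cos x := cos_pos_of_mem_Ioo ⟨by linarith [pi_pos], hx2⟩
  have hc_half : cos x < 1 / 2 := by
    rw [← cos_pi_div_three]
    exact cos_lt_cos_of_nonneg_of_le_pi (by positivity) (by linarith [pi_pos]) hx1
  have hcm : cos x ^ m ≤ cos x := by
    simpa using rpow_le_rpow_of_exponent_ge hc (cos_le_one x) hm
  nlinarith [sin_le_one x, rpow_pos_of_pos hc m]

lemma cos_rpow_lt_one_sub_sin (hc : 0 < cos x) (h : cos x ^ (m - 2) * (1 + sin x) < 1) :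
    cos x ^ m < 1 - sin x := by
  have hsin : sin x < 1 := by nlinarith [sin_sq_add_cos_sq x, sin_le_one x]
  have hsplit : cos x ^ m = cos x ^ (m - 2) * cos x ^ 2 := by
    simpa using rpow_add_natCast hc.ne' (m - 2) 2
  rw [hsplit, cos_sq']
  nlinarith

end Real

theorem stmt0 (n x : ℝ) (hn : 3 < n) (hx1 : 2 * π / (n + 1) ≤ x) (hx2 : x < π / 2) :
    (cos x) ^ n < 1 - sin x := by
  have hx0 : 0 < x := (div_pos (by positivity) (by linarith)).trans_le hx1
  have hnx : 2 * π ≤ (n + 1) * x := by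
    rw [div_le_iff₀ (by linarith)] at hx1
    linarith
  apply cos_rpow_lt_one_sub_sin (cos_pos_of_mem_Ioo ⟨by linarith, hx2⟩)
  rcases le_or_gt x (π / 3) with hsmall | hlarge
  · have hn5 : 5 ≤ n := by nlinarith [pi_pos]
    exact cos_rpow_mul_one_add_sin_lt_one_of_two_le_mul hx0 hx2 (by linarith)
      (by nlinarith [pi_gt_three])
  · exact cos_rpow_mul_one_add_sin_lt_one_of_pi_div_three_lt hlarge hx2 (by linarith)
end

section
/- For all complex z with |z - 1/2| ≤ 1/2 and all positive integers n, |z^n - 1| ≥ |z - 1|. -/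
/-!
Write `z = r e^{iθ}`. The disk condition becomes `r ≤ cos θ`, and the claim
`r² - 2 r cos θ ≤ r^{2n} - 2 rⁿ cos nθ`. If `cos nθ ≤ cos θ` this follows from `rⁿ ≤ r ≤ cos θ`.
Otherwise `nθ` lies within `|θ|` of a nonzero multiple of `2π`, so `(n + 1)|θ| ≥ 2π`, which
forces `cosⁿ θ + sin |θ| ≤ 1`, i.e. `|wⁿ| + |w - 1| ≤ 1` for the boundary point `w = cos θ · e^{iθ}`.
This persists for `z = (r / cos θ) w`, and the triangle inequality `|zⁿ - 1| ≥ 1 - rⁿ` concludes.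
-/

open Real

theorem Complex.sq_norm_sub_ofReal (z : ℂ) (a : ℝ) :
    ‖z - a‖ ^ 2 = ‖z‖ ^ 2 - 2 * a * z.re + a ^ 2 := by
  simp only [Complex.sq_norm, Complex.normSq_apply, Complex.sub_re, Complex.sub_im,
    Complex.ofReal_re, Complex.ofReal_im]
  ring

theorem Complex.re_pow_eq_norm_pow_mul_cos (z : ℂ) (n : ℕ) :
    (z ^ n).re = ‖z‖ ^ n * Real.cos (n * z.arg) := by
  conv_lhs => rw [← Complex.norm_mul_exp_arg_mul_I z]
  rw [mul_pow, ← Complex.exp_nat_mul, ← Complex.ofReal_pow, ← mul_assoc, ← Complex.ofReal_natCast,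
    ← Complex.ofReal_mul, Complex.re_ofReal_mul, Complex.exp_ofReal_mul_I_re]

theorem two_pi_le_of_cos_lt_cos_nat_mul {n : ℕ} (hn : n ≠ 0) {t : ℝ} (ht₀ : 0 ≤ t)
    (h : cos t < cos (n * t)) : 2 * π ≤ (n + 1) * t := by
  by_contra! hlt
  have hle : t ≤ n * t := le_mul_of_one_le_left ht₀ (by exact_mod_cast Nat.one_le_iff_ne_zero.2 hn)
  rcases le_total (n * t) π with hπ | hπ
  · exact (cos_le_cos_of_nonneg_of_le_pi ht₀ hπ hle).not_gt h
  · rw [← cos_two_pi_sub (n * t)] at h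
    exact (cos_le_cos_of_nonneg_of_le_pi ht₀ (by linarith) (by linarith)).not_gt h

theorem cos_pow_add_sin_le_one {n : ℕ} {t : ℝ} (ht₀ : 0 ≤ t) (ht : t < π / 2)
    (h : 2 * π ≤ (n + 1) * t) : cos t ^ n + sin t ≤ 1 := by
  have hc : 0 ≤ cos t := cos_nonneg_of_mem_Icc ⟨by linarith [pi_pos], ht.le⟩
  have hs : 0 ≤ sin t := sin_nonneg_of_nonneg_of_le_pi ht₀ (by linarith [pi_pos])
  have hcs := sin_sq_add_cos_sq t
  have hn : 3 < n := by
    have : (3 : ℝ) < n := by nlinarith [pi_pos]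
    exact_mod_cast this
  obtain ⟨k, rfl⟩ : ∃ k, n = k + 2 := ⟨n - 2, by omega⟩
  suffices hk : cos t ^ k * (1 + sin t) ≤ 1 by
    have : cos t ^ (k + 2) * (1 + sin t) ≤ cos t ^ 2 := by
      rw [pow_add, mul_right_comm]; exact mul_le_of_le_one_left (by positivity) hk
    nlinarith
  rcases le_or_gt (π / 4) t with hπ4 | hπ4
  · have hc2 : cos t ^ 2 ≤ 1 / 2 := by
      have := cos_le_cos_of_nonneg_of_le_pi (by positivity) (by linarith) hπ4
      rw [cos_pi_div_four] at this
      nlinarith [sq_sqrt (show (0:ℝ) ≤ 2 by norm_num), sqrt_nonneg 2]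
    have : cos t ^ k ≤ cos t ^ 2 := pow_le_pow_of_le_one hc (cos_le_one t) (by omega)
    nlinarith [sin_le_one t]
  · -- Jordan's inequality gives `(k - 1) sin t ≥ 2`, hence
    -- `(1 + sin t)² ≤ 1 + k sin² t ≤ (1 + sin² t)^k ≤ (cos² t)⁻ᵏ`.
    have hjordan : 2 / π * t ≤ sin t := mul_le_sin ht₀ (by linarith)
    have hks : 2 ≤ ((k : ℝ) - 1) * sin t := by
      have hkt : π ≤ ((k : ℝ) - 1) * t := by push_cast at h; nlinarith
      calc (2 : ℝ) = 2 / π * π := by field_simp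
        _ ≤ 2 / π * (((k : ℝ) - 1) * t) := by gcongr
        _ = ((k : ℝ) - 1) * (2 / π * t) := by ring
        _ ≤ ((k : ℝ) - 1) * sin t := by gcongr; nlinarith [pi_pos]
    have hbern : 1 + k * sin t ^ 2 ≤ (1 + sin t ^ 2) ^ k := one_add_mul_le_pow (by nlinarith) k
    have hprod : (cos t ^ 2) ^ k * (1 + sin t ^ 2) ^ k ≤ 1 := by
      rw [← mul_pow]; exact pow_le_one₀ (by positivity) (by nlinarith)
    have : (cos t ^ k * (1 + sin t)) ^ 2 ≤ 1 := by
      calc (cos t ^ k * (1 + sin t)) ^ 2 = (cos t ^ 2) ^ k * (1 + sin t) ^ 2 := by ring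
        _ ≤ (cos t ^ 2) ^ k * (1 + sin t ^ 2) ^ k := by gcongr; nlinarith
        _ ≤ 1 := hprod
    nlinarith [sq_nonneg (cos t ^ k * (1 + sin t) - 1), pow_nonneg hc k]

theorem sq_sub_two_mul_add_one_le_one_sub_pow_sq {n : ℕ} (hn : n ≠ 0) {r c s : ℝ} (hr : 0 ≤ r)
    (hrc : r ≤ c) (hs : 0 ≤ s) (hcs : c ^ 2 + s ^ 2 = 1) (hsmall : c ^ n + s ≤ 1) :
    r ^ 2 - 2 * r * c + 1 ≤ (1 - r ^ n) ^ 2 := by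
  rcases hr.eq_or_lt with rfl | hr
  · simp [zero_pow hn]
  have hc : 0 < c := hr.trans_le hrc
  have hcr : c * r ^ n ≤ r * (1 - s) := by
    obtain ⟨m, rfl⟩ : ∃ m, n = m + 1 := ⟨n - 1, by omega⟩
    calc c * r ^ (m + 1) = r * (c * r ^ m) := by ring
      _ ≤ r * (c * c ^ m) := by gcongr
      _ ≤ r * (1 - s) := by gcongr; rw [← pow_succ']; linarith
  have hbase : 0 ≤ c - r * (1 - s) := by nlinarith
  have hid : (c - r * (1 - s)) ^ 2 - c ^ 2 * (r ^ 2 - 2 * r * c + 1)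
      = 2 * r * s * (1 - s) * (c - r) := by
    linear_combination (2 * r * c - r ^ 2) * hcs
  have h1s : 0 ≤ 1 - s := by nlinarith
  have hle : c ^ 2 * (r ^ 2 - 2 * r * c + 1) ≤ c ^ 2 * (1 - r ^ n) ^ 2 := by
    rw [← mul_pow]
    have : (c - r * (1 - s)) ^ 2 ≤ (c * (1 - r ^ n)) ^ 2 := by gcongr; linarith
    nlinarith [mul_nonneg (mul_nonneg (mul_nonneg hr.le hs) h1s) (sub_nonneg.2 hrc)]
  exact le_of_mul_le_mul_left hle (by positivity)

theorem sq_sub_two_mul_cos_add_one_le {n : ℕ} (hn : n ≠ 0) {r θ : ℝ} (hr : 0 < r)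
    (hθ : |θ| ≤ π) (hrc : r ≤ cos θ) :
    r ^ 2 - 2 * r * cos θ + 1 ≤ (r ^ n) ^ 2 - 2 * r ^ n * cos (n * θ) + 1 := by
  wlog hθ₀ : 0 ≤ θ generalizing θ
  · simpa [mul_neg] using this (θ := -θ) (by rwa [abs_neg]) (by rwa [cos_neg]) (by linarith)
  have hrn : r ^ n ≤ r := pow_le_of_le_one hr.le (hrc.trans (cos_le_one θ)) hn
  have hρ : 0 ≤ r ^ n := pow_nonneg hr.le n
  rcases le_or_gt (cos (n * θ)) (cos θ) with h | h
  · nlinarith [mul_nonneg (sub_nonneg.2 hrn) (by linarith : 0 ≤ 2 * cos θ - r - r ^ n)]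
  · have hθπ : θ < π / 2 := by
      by_contra! hθπ
      have := cos_nonpos_of_pi_div_two_le_of_le hθπ (by linarith [abs_of_nonneg hθ₀])
      linarith
    have hsmall := cos_pow_add_sin_le_one hθ₀ hθπ (two_pi_le_of_cos_lt_cos_nat_mul hn hθ₀ h)
    have := sq_sub_two_mul_add_one_le_one_sub_pow_sq hn hr.le hrc
      (sin_nonneg_of_nonneg_of_le_pi hθ₀ (by linarith [pi_pos])) (cos_sq_add_sin_sq θ) hsmall
    nlinarith [cos_le_one (n * θ)]

theorem stmt1 (z : ℂ) (hz : ‖z - 1/2‖ ≤ 1/2) (n : ℕ) (hn : 0 < n) :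
    ‖z - 1‖ ≤ ‖z ^ n - 1‖ := by
  rcases eq_or_ne z 0 with rfl | hz0
  · simp [zero_pow hn.ne']
  have hr : 0 < ‖z‖ := norm_pos_iff.2 hz0
  have hrc : ‖z‖ ≤ cos z.arg := by
    have hdisk := Complex.sq_norm_sub_ofReal z (1 / 2)
    rw [← Complex.norm_mul_cos_arg] at hdisk
    push_cast at hdisk
    nlinarith [norm_nonneg (z - 1 / 2)]
  have h₁ := Complex.sq_norm_sub_ofReal z 1
  have hₙ := Complex.sq_norm_sub_ofReal (z ^ n) 1
  rw [← Complex.norm_mul_cos_arg] at h₁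
  rw [Complex.re_pow_eq_norm_pow_mul_cos, norm_pow] at hₙ
  push_cast at h₁ hₙ
  rw [← pow_le_pow_iff_left₀ (norm_nonneg _) (norm_nonneg _) two_ne_zero, h₁, hₙ]
  linarith [sq_sub_two_mul_cos_add_one_le hn.ne' hr (Complex.abs_arg_le_pi z) hrc]
end

section
/- For all complex w with Re w ≥ 1 and all positive integers n, |w^(n+1) - 1| ≥ |w|^n · |w - 1|. -/
/-!
Squaring both sides, the inequality becomes `2 Re w^(n+1) ≤ (2 Re w - 1) |w|^(2n) + 1`.
In polar form `w = R e^(iφ)` with `R cos φ = Re w ≥ 1`, and with `y = R^n`, this follows from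
`Re w ≥ 1` alone unless `y² + 1 < 2 y R cos((n+1)φ)`. In that remaining case `R < 2`, and
Bernoulli's inequality forces `R - 1 = O(1/n²)`, hence `φ = O(1/n)`; so `(n+1)φ` does not wrap
around the circle and in fact `(n+1)φ < π/3`. Then
`1 - cos((n+1)φ) ≥ 1 - cos 3φ = (1 - cos φ)(1 + 2 cos φ)² ≥ 4 (1 - cos φ) ≥ y (1 - cos φ)`,
which is exactly what is needed.
-/

open Real

lemma Real.lt_of_cos_lt_cos {x y : ℝ} (hy₀ : 0 ≤ y) (hxy : x ≤ 2 * π - y)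
    (h : cos y < cos x) : x < y := by
  by_contra! hyx
  rcases le_or_gt x π with hxπ | hπx
  · exact (cos_le_cos_of_nonneg_of_le_pi hy₀ hxπ hyx).not_gt h
  · have := cos_le_cos_of_nonneg_of_le_pi hy₀ (by linarith : 2 * π - x ≤ π) (by linarith)
    rw [cos_two_pi_sub] at this
    exact this.not_gt h

lemma Real.one_sub_cos_three_mul (x : ℝ) :
    1 - cos (3 * x) = (1 - cos x) * (1 + 2 * cos x) ^ 2 := by
  rw [cos_three_mul]
  ring

lemma Complex.re_pow_eq_norm_pow_mul_cos_s3 (w : ℂ) (m : ℕ) :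
    (w ^ m).re = ‖w‖ ^ m * Real.cos (m * |w.arg|) := by
  conv_lhs => rw [← Complex.norm_mul_exp_arg_mul_I w]
  rw [mul_pow, ← Complex.exp_nat_mul, ← Complex.ofReal_pow,
    show (m : ℂ) * (w.arg * Complex.I) = ((m * w.arg : ℝ) : ℂ) * Complex.I by push_cast; ring,
    Complex.re_ofReal_mul, Complex.exp_ofReal_mul_I_re, ← Real.cos_abs, abs_mul, Nat.abs_cast]

lemma Complex.sq_norm_sub_one (z : ℂ) : ‖z - 1‖ ^ 2 = ‖z‖ ^ 2 - 2 * z.re + 1 := by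
  rw [Complex.sq_norm, Complex.sq_norm, Complex.normSq_sub]
  simp only [map_one, mul_one]
  ring

lemma Complex.norm_pow_mul_norm_sub_one_le_iff (w : ℂ) (n : ℕ) :
    ‖w‖ ^ n * ‖w - 1‖ ≤ ‖w ^ (n + 1) - 1‖ ↔
      2 * (w ^ (n + 1)).re ≤ (2 * w.re - 1) * ‖w‖ ^ (2 * n) + 1 := by
  have hdiff : (‖w‖ ^ (n + 1)) ^ 2 - 2 * (w ^ (n + 1)).re + 1
      - (‖w‖ ^ n) ^ 2 * (‖w‖ ^ 2 - 2 * w.re + 1)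
      = (2 * w.re - 1) * ‖w‖ ^ (2 * n) + 1 - 2 * (w ^ (n + 1)).re := by ring
  rw [← pow_le_pow_iff_left₀ (by positivity) (norm_nonneg _) two_ne_zero, mul_pow,
    Complex.sq_norm_sub_one, Complex.sq_norm_sub_one, norm_pow, ← sub_nonneg, hdiff, sub_nonneg]

lemma add_one_mul_lt_five_pi_div_three {R φ : ℝ} {n : ℕ} (hn : 2 ≤ n) (hR : 1 ≤ R)
    (hφ₀ : 0 ≤ φ) (hφ : φ < π / 3) (h : 1 ≤ R * cos φ) (hy : (R ^ n) ^ 2 + 1 < 2 * R ^ n * R) :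
    (n + 1) * φ < 5 * π / 3 := by
  rcases le_or_gt n 4 with hn4 | hn5
  · have : (n : ℝ) + 1 ≤ 5 := by exact_mod_cast Nat.succ_le_succ hn4
    nlinarith
  have hn5' : (5 : ℝ) ≤ n := by exact_mod_cast hn5
  set ε := R - 1 with hε
  have hbern : 1 + n * ε ≤ R ^ n := by
    simpa using one_add_mul_le_pow (by linarith : -2 ≤ R - 1) n
  have hεn : n * (n - 2) * ε ≤ 2 := by
    rcases (show 0 ≤ ε by linarith).eq_or_lt with h0 | hpos
    · rw [← h0]
      simp
    · have ht : (n - 2) * ε ≤ R ^ n - 1 - 2 * ε := by linarith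
      have : n * (n - 2) * ε * ε < 2 * ε := by
        nlinarith [mul_le_mul (by linarith : n * ε ≤ R ^ n - 1) ht
          (mul_nonneg (by linarith) hpos.le) (by nlinarith)]
      exact (lt_of_mul_lt_mul_right this hpos.le).le
  have hφR : φ ^ 2 + 1 ≤ R ^ 2 := by
    have hcos := cos_le_one_div_sqrt_sq_add_one (x := φ) (by linarith [pi_pos])
      (by linarith [pi_pos])
    have hs : √(φ ^ 2 + 1) ≤ R := by
      rw [← one_le_div₀ (by positivity)]
      calc 1 ≤ R * cos φ := h
        _ ≤ R * (1 / √(φ ^ 2 + 1)) := mul_le_mul_of_nonneg_left hcos (by linarith)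
        _ = R / √(φ ^ 2 + 1) := by ring
    exact (Real.sqrt_le_iff.mp hs).2
  have hsq : ((n + 1) * φ) ^ 2 < 5 ^ 2 := by
    have hε0 : 0 ≤ ε := by linarith
    have hε1 : ε ≤ 2 / 15 := by
      nlinarith [mul_le_mul_of_nonneg_right (by nlinarith : (15 : ℝ) ≤ n * (n - 2)) hε0]
    calc ((n + 1) * φ) ^ 2 ≤ (n + 1) ^ 2 * (ε * (2 + ε)) := by
          rw [mul_pow]
          exact mul_le_mul_of_nonneg_left (by nlinarith) (by positivity)
      _ ≤ 3 * (n * (n - 2) * ε) * (2 + ε) := by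
          nlinarith [mul_le_mul_of_nonneg_right
            (by nlinarith : ((n : ℝ) + 1) ^ 2 ≤ 3 * (n * (n - 2)))
            (mul_nonneg hε0 (by linarith : (0 : ℝ) ≤ 2 + ε))]
      _ < 5 ^ 2 := by nlinarith
  have := abs_lt_of_sq_lt_sq' hsq (by norm_num)
  linarith [pi_gt_three]

lemma two_mul_pow_succ_mul_cos_le_of_lt {R φ : ℝ} {n : ℕ} (hn : 2 ≤ n) (hR : 0 ≤ R)
    (hφ₀ : 0 ≤ φ) (hφπ : φ ≤ π) (h : 1 ≤ R * cos φ)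
    (hard : R ^ (2 * n) + 1 < 2 * R ^ (n + 1) * cos ((n + 1) * φ)) :
    2 * R ^ (n + 1) * cos ((n + 1) * φ) ≤ (2 * (R * cos φ) - 1) * R ^ (2 * n) + 1 := by
  set ψ := ((n : ℝ) + 1) * φ
  have hR1 : 1 ≤ R := h.trans (mul_le_of_le_one_right hR (cos_le_one φ))
  have hy1 : 1 ≤ R ^ n := one_le_pow₀ hR1
  have hRy : R ^ 2 ≤ R ^ n := pow_le_pow_right₀ hR1 hn
  rw [show R ^ (2 * n) = (R ^ n) ^ 2 by ring, show R ^ (n + 1) = R ^ n * R by ring] at hard ⊢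
  have hyR : R ^ n < 2 * R := by
    have : R ^ n * R ^ n < R ^ n * (2 * R) := by
      nlinarith [mul_le_mul_of_nonneg_left (cos_le_one ψ) (by positivity : 0 ≤ 2 * (R ^ n * R))]
    exact lt_of_mul_lt_mul_left this (by positivity)
  have hR2 : R < 2 := by nlinarith
  have hcφ : 1 / 2 < cos φ := by nlinarith
  have hRψ : 1 < R * cos ψ := by nlinarith [sq_nonneg (R ^ n - 1)]
  have hcψ : 1 / 2 < cos ψ := by nlinarith
  have hφ : φ < π / 3 :=
    lt_of_cos_lt_cos (by positivity) (by linarith) (by rwa [cos_pi_div_three])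
  have hψ : ψ < π / 3 := by
    refine lt_of_cos_lt_cos (by positivity) ?_ (by rwa [cos_pi_div_three])
    have := add_one_mul_lt_five_pi_div_three hn hR1 hφ₀ hφ h (by nlinarith [cos_le_one ψ])
    linarith
  have h3φ : 3 * φ ≤ ψ := by
    have : (3 : ℝ) ≤ n + 1 := by norm_cast; omega
    nlinarith
  have hgap : R ^ n * (1 - cos φ) ≤ 1 - cos ψ :=
    calc R ^ n * (1 - cos φ) ≤ (1 - cos φ) * (1 + 2 * cos φ) ^ 2 := by
          have h1c : 0 ≤ 1 - cos φ := by linarith [cos_le_one φ]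
          nlinarith [mul_le_mul_of_nonneg_right (by linarith : R ^ n ≤ 4) h1c,
            mul_nonneg h1c (by nlinarith : 0 ≤ (1 + 2 * cos φ) ^ 2 - 4)]
      _ = 1 - cos (3 * φ) := (one_sub_cos_three_mul φ).symm
      _ ≤ 1 - cos ψ := by
          linarith [cos_le_cos_of_nonneg_of_le_pi (by positivity) (by linarith) h3φ]
  -- with `y = R ^ n`, the gap between the two sides is
  -- `(y - 1) * ((2 * R - 1) * y - 1) + 2 * R * y * ((1 - cos ψ) - y * (1 - cos φ))`
  nlinarith [mul_nonneg (by linarith : 0 ≤ R ^ n - 1)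
      (by nlinarith : 0 ≤ (2 * R - 1) * R ^ n - 1),
    mul_nonneg (by positivity : 0 ≤ 2 * R * R ^ n)
      (by linarith : 0 ≤ 1 - cos ψ - R ^ n * (1 - cos φ))]

theorem two_mul_pow_succ_mul_cos_le {R φ : ℝ} (hR : 0 ≤ R) (hφ₀ : 0 ≤ φ) (hφπ : φ ≤ π)
    (h : 1 ≤ R * cos φ) (n : ℕ) :
    2 * R ^ (n + 1) * cos ((n + 1) * φ) ≤ (2 * (R * cos φ) - 1) * R ^ (2 * n) + 1 := by
  rcases Nat.lt_or_ge n 2 with hn | hn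
  · interval_cases n
    · simp [mul_assoc]
    · norm_num only [Nat.cast_one, one_add_one_eq_two, cos_two_mul]
      nlinarith [mul_nonneg (by linarith : 0 ≤ 2 * (R * cos φ) + 1)
          (mul_nonneg (sq_nonneg R) (by nlinarith [cos_sq_le_one φ] : 0 ≤ 1 - cos φ ^ 2)),
        mul_nonneg (by linarith : 0 ≤ 2 * (R * cos φ) + 1) (sq_nonneg (R * cos φ - 1))]
  by_cases hard : R ^ (2 * n) + 1 < 2 * R ^ (n + 1) * cos ((n + 1) * φ)
  · exact two_mul_pow_succ_mul_cos_le_of_lt hn hR hφ₀ hφπ h hard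
  · nlinarith [pow_nonneg hR (2 * n)]

theorem stmt3_general (w : ℂ) (hw : 1 ≤ w.re) (n : ℕ) :
    ‖w‖ ^ n * ‖w - 1‖ ≤ ‖w ^ (n + 1) - 1‖ := by
  have hre : w.re = ‖w‖ * cos |w.arg| := by
    rw [cos_abs, Complex.norm_mul_cos_arg]
  rw [Complex.norm_pow_mul_norm_sub_one_le_iff, Complex.re_pow_eq_norm_pow_mul_cos_s3, hre]
  push_cast
  have := two_mul_pow_succ_mul_cos_le (norm_nonneg w) (abs_nonneg _) (Complex.abs_arg_le_pi w)
    (hre ▸ hw) n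
  linarith

theorem stmt3 (w : ℂ) (hw : 1 ≤ w.re) (n : ℕ) (hn : 0 < n) :
    ‖w‖ ^ n * ‖w - 1‖ ≤ ‖w ^ (n + 1) - 1‖ :=
  stmt3_general w hw n
end

section
/- For all real n > 3, sin(2π/(n+1)) > 2/(n-1). -/
open Real
theorem stmt5 (n : ℝ) (hn : 3 < n) : 2 / (n - 1) < sin (2 * π / (n + 1)) := by
  have hpi := pi_pos
  have hn1 : (0:ℝ) < n + 1 := by linarith
  have hx0 : (0:ℝ) ≤ 2 * π / (n + 1) := by positivity
  have hx1 : 2 * π / (n + 1) ≤ π / 2 := by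
    rw [div_le_div_iff₀ hn1 (by norm_num)]
    nlinarith
  have key := Real.mul_le_sin hx0 hx1
  have heq : 2 / π * (2 * π / (n + 1)) = 4 / (n + 1) := by
    field_simp
    ring
  rw [heq] at key
  have hlt : 2 / (n - 1) < 4 / (n + 1) := by
    rw [div_lt_div_iff₀ (by linarith) hn1]
    nlinarith
  linarith
end

section
/- For all real n > 3 and all real x with 2π/(n+1) ≤ x < π/2, and for every positive integer k, we have (n-1)·(sin x)^(2k)/(2k) > (sin x)^(2k-1)/(2k-1). -/
open Real
theorem stmt7 (n x : ℝ) (hn : 3 < n) (hx1 : 2 * π / (n + 1) ≤ x) (hx2 : x < π / 2)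
    (k : ℕ) (hk : 0 < k) :
    (sin x) ^ (2 * k - 1) / (2 * k - 1 : ℝ) < (n - 1) * (sin x) ^ (2 * k) / (2 * k : ℝ) := by
  have hπ := pi_pos
  have hn1 : (0:ℝ) < n + 1 := by linarith
  have ht0 : 0 < 2 * π / (n + 1) := by positivity
  have ht2 : 2 * π / (n + 1) ≤ π / 2 := by
    rw [div_le_div_iff₀ hn1 (by norm_num)]
    nlinarith
  have hx0 : 0 < x := lt_of_lt_of_le ht0 hx1
  have hs : 0 < sin x := sin_pos_of_pos_of_lt_pi hx0 (by linarith)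
  -- sin is monotone on [-π/2, π/2]
  have hsx : sin (2 * π / (n + 1)) ≤ sin x := by
    apply Real.strictMonoOn_sin.monotoneOn
    · constructor <;> [linarith; linarith]
    · constructor <;> [linarith; linarith]
    · exact hx1
  have hjordan : 2 / π * (2 * π / (n + 1)) ≤ sin (2 * π / (n + 1)) :=
    Real.mul_le_sin (le_of_lt ht0) ht2
  have hval : 2 / π * (2 * π / (n + 1)) = 4 / (n + 1) := by
    field_simp; ring
  have hkey : 2 < (n - 1) * sin x := by
    have h1 : 4 / (n + 1) ≤ sin x := by rw [← hval]; linarith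
    have h2 : (n - 1) * (4 / (n + 1)) ≤ (n - 1) * sin x :=
      mul_le_mul_of_nonneg_left h1 (by linarith)
    have h3 : 2 < (n - 1) * (4 / (n + 1)) := by
      rw [show (n-1)*(4/(n+1)) = (4*(n-1))/(n+1) by ring, lt_div_iff₀ hn1]; nlinarith
    linarith
  have hpow : sin x ^ (2 * k) = sin x ^ (2 * k - 1) * sin x := by
    rw [← pow_succ]; congr 1; omega
  have hP : 0 < sin x ^ (2 * k - 1) := pow_pos hs _
  have hK : (1:ℝ) ≤ (k:ℝ) := by exact_mod_cast hk
  rw [hpow, div_lt_div_iff₀ (by push_cast; linarith) (by push_cast; linarith)]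
  push_cast
  nlinarith [mul_pos hP (sub_pos.mpr hkey), mul_nonneg (le_of_lt hP) (by linarith : (0:ℝ) ≤ 2*(k:ℝ) - 2), mul_nonneg (mul_nonneg (le_of_lt hP) (by linarith : (0:ℝ) ≤ (n-1)*sin x - 2)) (by linarith : (0:ℝ) ≤ (k:ℝ) - 1)]
end

section
/- For all real n > 3 and all real x with 2π/(n+1) ≤ x < π/2, we have (n/2)·log(1 - sin²x) < log(1 - sin x). -/
/-!
Put `s = sin x`. Jordan's inequality `2x/π ≤ sin x` and `x ≥ 2π/(n+1)` give `s (n+1) ≥ 4`,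
and since `log (1 - s²) < 0` it suffices to treat the extreme case `n = 4/s - 1`. With
`A = log (1 - s)` and `B = log (1 + s)` that case reads `(4 - 3s) A + (4 - s) B < 0`. The left side
`H(s)` satisfies `H(0) = H'(0) = 0` and `H'' < 0` on `(0, 1)`, so it is negative there.
-/

open Real Set

lemma strictAntiOn_Ico_of_hasDerivAt_neg {f f' : ℝ → ℝ} {a b : ℝ}
    (hf : ∀ t ∈ Ico a b, HasDerivAt f (f' t) t) (hf' : ∀ t ∈ Ioo a b, f' t < 0) :
    StrictAntiOn f (Ico a b) := by
  refine strictAntiOn_of_hasDerivWithinAt_neg (f' := f') (convex_Ico a b)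
    (fun t ht ↦ (hf t ht).continuousAt.continuousWithinAt) (fun t ht ↦ ?_) (fun t ht ↦ ?_)
  · rw [interior_Ico] at ht
    exact (hf t (Ioo_subset_Ico_self ht)).hasDerivWithinAt
  · rw [interior_Ico] at ht
    exact hf' t ht

lemma neg_of_hasDerivAt_neg_of_apply_zero {f f' : ℝ → ℝ} {b : ℝ}
    (hf : ∀ t ∈ Ico 0 b, HasDerivAt f (f' t) t) (hf' : ∀ t ∈ Ioo 0 b, f' t < 0) (hf0 : f 0 = 0)
    {t : ℝ} (ht : t ∈ Ioo 0 b) : f t < 0 :=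
  hf0 ▸ strictAntiOn_Ico_of_hasDerivAt_neg hf hf' (left_mem_Ico.2 (ht.1.trans ht.2))
    (Ioo_subset_Ico_self ht) ht.1

lemma hasDerivAt_log_one_sub {t : ℝ} (ht : t < 1) :
    HasDerivAt (fun u ↦ log (1 - u)) (-1 / (1 - t)) t :=
  ((hasDerivAt_id' t).const_sub 1).log (by linarith)

lemma hasDerivAt_log_one_add {t : ℝ} (ht : -1 < t) :
    HasDerivAt (fun u ↦ log (1 + u)) (1 / (1 + t)) t :=
  ((hasDerivAt_id' t).const_add 1).log (by linarith)

lemma hasDerivAt_weighted_log_sum {t : ℝ} (ht : t ∈ Ioo (-1 : ℝ) 1) :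
    HasDerivAt (fun u ↦ (4 - 3 * u) * log (1 - u) + (4 - u) * log (1 + u))
      (-3 * log (1 - t) - log (1 + t) - 4 - 1 / (1 - t) + 5 / (1 + t)) t := by
  have h1 : 1 - t ≠ 0 := by linarith [ht.2]
  have h2 : 1 + t ≠ 0 := by linarith [ht.1]
  have := ((((hasDerivAt_id' t).const_mul 3).const_sub 4).mul (hasDerivAt_log_one_sub ht.2)).add
    (((hasDerivAt_id' t).const_sub 4).mul (hasDerivAt_log_one_add ht.1))
  refine this.congr_deriv ?_
  field_simp
  ring

lemma hasDerivAt_deriv_weighted_log_sum {t : ℝ} (ht : t ∈ Ioo (-1 : ℝ) 1) :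
    HasDerivAt (fun u ↦ -3 * log (1 - u) - log (1 + u) - 4 - 1 / (1 - u) + 5 / (1 + u))
      (-4 * (1 - 3 * t + 2 * t ^ 2 + t ^ 3) / ((1 - t) * (1 + t)) ^ 2) t := by
  have h1 : 1 - t ≠ 0 := by linarith [ht.2]
  have h2 : 1 + t ≠ 0 := by linarith [ht.1]
  have := (((((hasDerivAt_log_one_sub ht.2).const_mul (-3)).sub
    (hasDerivAt_log_one_add ht.1)).sub_const 4).sub
    ((hasDerivAt_const t 1).div ((hasDerivAt_id' t).const_sub 1) h1)).add
    ((hasDerivAt_const t 5).div ((hasDerivAt_id' t).const_add 1) h2)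
  refine this.congr_deriv ?_
  field_simp
  ring

lemma one_sub_three_mul_add_two_mul_sq_add_pow_three_pos {t : ℝ} (ht : 0 ≤ t) :
    0 < 1 - 3 * t + 2 * t ^ 2 + t ^ 3 := by
  nlinarith [sq_nonneg (2 * t - 1), mul_nonneg (sq_nonneg (4 * t - 3)) ht, pow_nonneg ht 3]

lemma weighted_log_one_sub_add_log_one_add_neg {s : ℝ} (hs : s ∈ Ioo (0 : ℝ) 1) :
    (4 - 3 * s) * log (1 - s) + (4 - s) * log (1 + s) < 0 := by
  have hmem {t : ℝ} (ht : t ∈ Ico (0 : ℝ) 1) : t ∈ Ioo (-1 : ℝ) 1 := ⟨by linarith [ht.1], ht.2⟩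
  have hsecond_neg : ∀ t ∈ Ioo (0 : ℝ) 1,
      -4 * (1 - 3 * t + 2 * t ^ 2 + t ^ 3) / ((1 - t) * (1 + t)) ^ 2 < 0 := fun t ht ↦
    div_neg_of_neg_of_pos
      (by linarith [one_sub_three_mul_add_two_mul_sq_add_pow_three_pos ht.1.le])
      (pow_pos (mul_pos (by linarith [ht.2]) (by linarith [ht.1])) 2)
  have hfirst_neg : ∀ t ∈ Ioo (0 : ℝ) 1,
      -3 * log (1 - t) - log (1 + t) - 4 - 1 / (1 - t) + 5 / (1 + t) < 0 := fun t ht ↦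
    neg_of_hasDerivAt_neg_of_apply_zero
      (fun u hu ↦ hasDerivAt_deriv_weighted_log_sum (hmem hu)) hsecond_neg (by norm_num) ht
  exact neg_of_hasDerivAt_neg_of_apply_zero
    (fun u hu ↦ hasDerivAt_weighted_log_sum (hmem hu)) hfirst_neg (by norm_num) hs

lemma half_mul_log_one_sub_sq_lt_log_one_sub {n s : ℝ} (hs : s ∈ Ioo (0 : ℝ) 1)
    (hsn : 4 ≤ s * (n + 1)) : n / 2 * log (1 - s ^ 2) < log (1 - s) := by
  obtain ⟨hs0, hs1⟩ := hs
  have hsum : log (1 - s ^ 2) = log (1 - s) + log (1 + s) := by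
    rw [← log_mul (by linarith) (by linarith)]
    ring_nf
  have hsum_neg : log (1 - s ^ 2) < 0 := log_neg (by nlinarith) (by nlinarith)
  have hkey := weighted_log_one_sub_add_log_one_add_neg ⟨hs0, hs1⟩
  have hscaled : s * (n * log (1 - s ^ 2)) < s * (2 * log (1 - s)) := by
    nlinarith [mul_le_mul_of_nonpos_right (by linarith : 4 - s ≤ s * n) hsum_neg.le]
  linarith [lt_of_mul_lt_mul_left hscaled hs0.le]

theorem stmt8 (n x : ℝ) (hn : 3 < n) (hx1 : 2 * π / (n + 1) ≤ x) (hx2 : x < π / 2) :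
    (n / 2) * Real.log (1 - sin x ^ 2) < Real.log (1 - sin x) := by
  have hn1 : 0 < n + 1 := by linarith
  have hx0 : 0 < x := (by positivity : 0 < 2 * π / (n + 1)).trans_le hx1
  have hsin_lt_one : sin x < 1 := by
    simpa using sin_lt_sin_of_lt_of_le_pi_div_two (by linarith) le_rfl hx2
  have hsin_pos : 0 < sin x := sin_pos_of_pos_of_lt_pi hx0 (by linarith [pi_pos])
  have hsn : 4 ≤ sin x * (n + 1) := by
    have : 4 / (n + 1) ≤ sin x :=
      calc 4 / (n + 1) = 2 / π * (2 * π / (n + 1)) := by field_simp; ring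
        _ ≤ 2 / π * x := by gcongr
        _ ≤ sin x := mul_le_sin hx0.le hx2.le
    rwa [div_le_iff₀ hn1] at this
  exact half_mul_log_one_sub_sq_lt_log_one_sub ⟨hsin_pos, hsin_lt_one⟩ hsn
end

section
/- Let z = cos φ · e^{iφ} with 0 < φ < π/2, and let n > 1 be real with nφ ≤ 2π - φ. Then |z^n - 1| > |z - 1|, where z^n = (cos φ)^n · e^{inφ}. -/
/-! With `r = cos φ`, the identity `‖a e^{iθ} - 1‖² = a² - 2a cos θ + 1` gives `‖z - 1‖² = 1 - r²`
and `‖z^n - 1‖² = s² - 2s cos(nφ) + 1` with `s = rⁿ`. Since `φ ≤ nφ ≤ 2π - φ` we have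
`cos(nφ) ≤ r`, so `‖z^n - 1‖² ≥ (s - r)² + 1 - r²`, and `s < r` because `0 < r < 1 < n`. -/

open Real Complex

theorem Complex.norm_ofReal_mul_exp_mul_I_sub_one_sq (a θ : ℝ) :
    ‖(a : ℂ) * exp (θ * I) - 1‖ ^ 2 = a ^ 2 - 2 * a * Real.cos θ + 1 := by
  rw [← normSq_eq_norm_sq, normSq_apply]
  simp only [exp_mul_I, sub_re, mul_re, ofReal_re, add_re, cos_ofReal_re, sin_ofReal_re, I_re,
    mul_zero, sin_ofReal_im, I_im, mul_one, sub_self, add_zero, ofReal_im, add_im, cos_ofReal_im,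
    mul_im, zero_add, zero_mul, sub_zero, one_re, sub_im, one_im]
  linear_combination a ^ 2 * Real.sin_sq_add_cos_sq θ

theorem Real.cos_le_cos_of_le_of_le_two_pi_sub {φ x : ℝ} (hφ : 0 ≤ φ) (h₁ : φ ≤ x)
    (h₂ : x ≤ 2 * π - φ) : Real.cos x ≤ Real.cos φ := by
  rcases le_or_gt x π with hx | hx
  · exact cos_le_cos_of_nonneg_of_le_pi hφ hx h₁
  · rw [← Real.cos_two_pi_sub]
    exact cos_le_cos_of_nonneg_of_le_pi hφ (by linarith) (by linarith)

theorem stmt10 (φ n : ℝ) (h1 : 0 < φ) (h2 : φ < π / 2) (hn : 1 < n)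
    (hnφ : n * φ ≤ 2 * π - φ) :
    ‖(Real.cos φ : ℂ) * Complex.exp (φ * Complex.I) - 1‖ <
      ‖((Real.cos φ) ^ n : ℝ) * Complex.exp (n * φ * Complex.I) - 1‖ := by
  set r := Real.cos φ
  have hr0 : 0 < r := cos_pos_of_mem_Ioo ⟨by linarith [pi_pos], h2⟩
  have hr1 : r < 1 := by
    simpa using cos_lt_cos_of_nonneg_of_le_pi le_rfl (by linarith [pi_pos]) h1
  have hsr : r ^ n < r := rpow_lt_self_of_lt_one hr0 hr1 hn
  have hcos : Real.cos (n * φ) ≤ r :=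
    cos_le_cos_of_le_of_le_two_pi_sub h1.le (by nlinarith) hnφ
  apply lt_of_pow_lt_pow_left₀ 2 (norm_nonneg _)
  rw [← ofReal_mul, norm_ofReal_mul_exp_mul_I_sub_one_sq, norm_ofReal_mul_exp_mul_I_sub_one_sq]
  nlinarith [mul_le_mul_of_nonneg_left hcos (rpow_pos_of_pos hr0 n).le]
end

section
/- Let 0 < r < 1, let 0 < φ < π/2, and let w be a complex number with |w| ≤ r and w not in the open sector {ρe^{iθ} : ρ > 0, -φ < θ < φ}. If r ≤ cos φ, then |w - 1| > |r e^{iφ} - 1| whenever |w| < r, and |w - 1| ≥ |r e^{iφ} - 1| in general. -/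
/-!
Writing `s = ‖w‖` and `c = cos φ`, a point outside the sector has `arg w` at least `φ` in absolute
value, so `re w ≤ s c` and `‖w - 1‖² = s² - 2 re w + 1 ≥ s² - 2 s c + 1`. The right-hand side is
strictly decreasing in `s` on `[0, c]`, and its value at `s = r` is `‖r e^{iφ} - 1‖²`; since
`s ≤ r ≤ c`, this gives the (strict, when `s < r`) comparison.
-/

open Real

namespace Complex

lemma sq_norm_sub_one_s12 (z : ℂ) : ‖z - 1‖ ^ 2 = ‖z‖ ^ 2 - 2 * z.re + 1 := by
  simp [norm_sub_sq_real]

lemma sq_norm_ofReal_mul_exp_sub_one (r φ : ℝ) :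
    ‖(r : ℂ) * exp (φ * I) - 1‖ ^ 2 = r ^ 2 - 2 * r * Real.cos φ + 1 := by
  rw [sq_norm_sub_one_s12, norm_mul, norm_exp_ofReal_mul_I, mul_one, norm_real, Real.norm_eq_abs,
    sq_abs, re_ofReal_mul, exp_ofReal_mul_I_re, mul_assoc]

lemma le_abs_arg_of_not_mem_sector {φ : ℝ} {z : ℂ} (hz : z ≠ 0)
    (hsec : ¬ ∃ ρ θ : ℝ, 0 < ρ ∧ -φ < θ ∧ θ < φ ∧ z = (ρ : ℂ) * exp (θ * I)) :
    φ ≤ |z.arg| := by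
  by_contra! h
  obtain ⟨hlo, hhi⟩ := abs_lt.mp h
  exact hsec ⟨‖z‖, z.arg, norm_pos_iff.mpr hz, hlo, hhi, (norm_mul_exp_arg_mul_I z).symm⟩

lemma re_le_norm_mul_cos_of_le_abs_arg {φ : ℝ} {z : ℂ} (hφ : 0 ≤ φ) (h : φ ≤ |z.arg|) :
    z.re ≤ ‖z‖ * Real.cos φ := by
  have hcos : Real.cos |z.arg| ≤ Real.cos φ :=
    Real.cos_le_cos_of_nonneg_of_le_pi hφ (abs_le.mpr ⟨(neg_pi_lt_arg z).le, arg_le_pi z⟩) h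
  rw [Real.cos_abs] at hcos
  rw [← norm_mul_cos_arg]
  exact mul_le_mul_of_nonneg_left hcos (norm_nonneg z)

lemma re_le_norm_mul_cos_of_not_mem_sector {φ : ℝ} {z : ℂ} (hφ : 0 ≤ φ)
    (hsec : ¬ ∃ ρ θ : ℝ, 0 < ρ ∧ -φ < θ ∧ θ < φ ∧ z = (ρ : ℂ) * exp (θ * I)) :
    z.re ≤ ‖z‖ * Real.cos φ := by
  rcases eq_or_ne z 0 with rfl | hz
  · simp
  · exact re_le_norm_mul_cos_of_le_abs_arg hφ (le_abs_arg_of_not_mem_sector hz hsec)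

end Complex

theorem stmt12_general (r φ : ℝ) (hφ1 : 0 < φ)
    (w : ℂ) (hw : ‖w‖ ≤ r)
    (hsec : ¬ ∃ ρ θ : ℝ, 0 < ρ ∧ -φ < θ ∧ θ < φ ∧ w = (ρ : ℂ) * Complex.exp (θ * Complex.I))
    (hrc : r ≤ Real.cos φ) :
    (‖w‖ < r → ‖(r : ℂ) * Complex.exp (φ * Complex.I) - 1‖ < ‖w - 1‖) ∧
      ‖(r : ℂ) * Complex.exp (φ * Complex.I) - 1‖ ≤ ‖w - 1‖ := by
  have hre := Complex.re_le_norm_mul_cos_of_not_mem_sector hφ1.le hsec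
  have hw_sq := Complex.sq_norm_sub_one_s12 w
  have hr_sq := Complex.sq_norm_ofReal_mul_exp_sub_one r φ
  have hs := norm_nonneg w
  -- `‖w - 1‖² - ‖r e^{iφ} - 1‖² ≥ (r - ‖w‖) (2 cos φ - r - ‖w‖)`, a product of two nonnegative factors
  refine ⟨fun hlt => lt_of_pow_lt_pow_left₀ 2 (norm_nonneg _) ?_,
    le_of_pow_le_pow_left₀ two_ne_zero (norm_nonneg _) ?_⟩
  · nlinarith
  · nlinarith

theorem stmt12 (r φ : ℝ) (hr1 : 0 < r) (hr2 : r < 1) (hφ1 : 0 < φ) (hφ2 : φ < π / 2)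
    (w : ℂ) (hw : ‖w‖ ≤ r)
    (hsec : ¬ ∃ ρ θ : ℝ, 0 < ρ ∧ -φ < θ ∧ θ < φ ∧ w = (ρ : ℂ) * Complex.exp (θ * Complex.I))
    (hrc : r ≤ Real.cos φ) :
    (‖w‖ < r → ‖(r : ℂ) * Complex.exp (φ * Complex.I) - 1‖ < ‖w - 1‖) ∧
      ‖(r : ℂ) * Complex.exp (φ * Complex.I) - 1‖ ≤ ‖w - 1‖ :=
  stmt12_general r φ hφ1 w hw hsec hrc
end

section
/- For all complex z with |z - 1/2| ≤ 1/2, z ≠ 0, and all real n ≥ 1, |z^n - 1| ≥ |z - 1|, where z^n denotes the principal complex power. -/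
/-!
Write `z = r e^{iθ}` with `θ = |arg z| < π / 2`, so that the disk condition reads `r ≤ cos θ` and
`‖z ^ n - 1‖² - ‖z - 1‖² = r ^ (2n) - 2 r ^ n cos (nθ) - r² + 2 r cos θ`.
If `nθ ≤ π / 2`, concavity of `cos` together with Bernoulli's inequality gives
`cos (nθ) ≤ cos θ ^ n`, reducing the claim to an inequality between real powers.
If `π / 2 ≤ nθ ≤ 3π / 2`, then `cos (nθ) ≤ 0` and the claim is immediate.
If `nθ ≥ 3π / 2`, then `n` is large compared with `1 / θ`, and Bernoulli's inequality for
`(cos θ)⁻¹` gives `cos θ ^ (n - 1) * (1 + sin θ) ≤ cos θ`; this makes `r ^ n` small enough to win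
even when `cos (nθ) = 1`.
-/

open Real

theorem rpow_eq_mul_rpow_sub_one {x : ℝ} (hx : 0 ≤ x) {n : ℝ} (hn : 1 ≤ n) :
    x ^ n = x * x ^ (n - 1) := by
  rw [← rpow_one_add' hx (by linarith), add_sub_cancel]

theorem sub_rpow_le_two_mul_sub_rpow {t x n : ℝ} (ht : 0 ≤ t) (hxt : x ^ 2 ≤ t) (htx : t ≤ x)
    (hx : x ≤ 1) (hn : 1 ≤ n) : t - t ^ n ≤ 2 * (x - x ^ n) := by
  have hx0 : 0 ≤ x := ht.trans htx
  set y := x ^ (n - 1) with hy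
  have hy0 : 0 ≤ y := rpow_nonneg hx0 _
  have hy1 : y ≤ 1 := rpow_le_one hx0 hx (by linarith)
  have hty : y ^ 2 ≤ t ^ (n - 1) := by
    rw [hy, rpow_pow_comm hx0]
    exact rpow_le_rpow (by positivity) hxt (by linarith)
  calc t - t ^ n = t * (1 - t ^ (n - 1)) := by rw [rpow_eq_mul_rpow_sub_one ht hn]; ring
    _ ≤ x * (1 - y ^ 2) := by
        gcongr
        linarith [rpow_le_one ht (htx.trans hx) (by linarith : 0 ≤ n - 1)]
    _ = x * (1 - y) * (1 + y) := by ring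
    _ ≤ x * (1 - y) * 2 := by gcongr; linarith
    _ = 2 * (x - x ^ n) := by rw [rpow_eq_mul_rpow_sub_one hx0 hn]; ring

theorem cos_mul_le_cos_rpow {θ n : ℝ} (hθ : 0 ≤ θ) (hn : 1 ≤ n) (hnθ : n * θ ≤ π / 2) :
    cos (n * θ) ≤ cos θ ^ n := by
  have hn0 : 0 < n := by linarith
  have hconc : n⁻¹ * cos (n * θ) + (1 - n⁻¹) * cos 0 ≤ cos (n⁻¹ * (n * θ) + (1 - n⁻¹) * 0) :=
    strictConcaveOn_cos_Icc.concaveOn.2 ⟨by nlinarith [pi_pos], hnθ⟩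
      ⟨by linarith [pi_pos], by linarith [pi_pos]⟩ (by positivity)
      (sub_nonneg.2 (inv_le_one_of_one_le₀ hn)) (by ring)
  rw [cos_zero, mul_zero, add_zero, inv_mul_cancel_left₀ hn0.ne'] at hconc
  have hchord : cos (n * θ) ≤ 1 + n * (cos θ - 1) := by
    have := mul_le_mul_of_nonneg_left hconc hn0.le
    field_simp at this
    linarith
  have hc : 0 ≤ cos θ := cos_nonneg_of_neg_pi_div_two_le_of_le (by linarith [pi_pos]) (by nlinarith)
  have hbern : 1 + n * (cos θ - 1) ≤ cos θ ^ n := by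
    simpa using one_add_mul_self_le_rpow_one_add (s := cos θ - 1) (by linarith) hn
  exact hchord.trans hbern

theorem mul_sin_mul_cos_le {θ : ℝ} (hθ : 0 < θ) (hθ' : θ < π / 2) :
    θ * sin θ * cos θ ≤ (3 * π / 2 - 2 * θ) * (1 - cos θ) := by
  have hs : 0 < sin θ := sin_pos_of_pos_of_lt_pi hθ (by linarith)
  have hc : 0 < cos θ := cos_pos_of_mem_Ioo ⟨by linarith, hθ'⟩
  have hθc : θ * cos θ ≤ sin θ := by
    have := le_tan hθ.le hθ'
    rwa [tan_eq_sin_div_cos, le_div_iff₀ hc] at this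
  have hcθ : cos θ ≤ π / 2 - θ := by
    rw [← sin_pi_div_two_sub]
    exact sin_le (by linarith)
  have key : θ * cos θ * (1 + cos θ) ≤ sin θ * (3 * π / 2 - 2 * θ) := by
    have : 1 + cos θ ≤ 3 * π / 2 - 2 * θ := by linarith [pi_gt_three]
    calc θ * cos θ * (1 + cos θ) ≤ sin θ * (1 + cos θ) := by gcongr
      _ ≤ sin θ * (3 * π / 2 - 2 * θ) := by gcongr
  have hsq := sin_sq_add_cos_sq θ
  have : sin θ * (θ * sin θ * cos θ) ≤ sin θ * ((3 * π / 2 - 2 * θ) * (1 - cos θ)) := by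
    nlinarith [mul_le_mul_of_nonneg_right key (by linarith [cos_le_one θ] : 0 ≤ 1 - cos θ)]
  exact le_of_mul_le_mul_left this hs

theorem cos_rpow_mul_one_add_sin_le {θ n : ℝ} (hθ : 0 < θ) (hθ' : θ < π / 2)
    (hnθ : 3 * π / 2 ≤ n * θ) : cos θ ^ (n - 1) * (1 + sin θ) ≤ cos θ := by
  have hc : 0 < cos θ := cos_pos_of_mem_Ioo ⟨by linarith, hθ'⟩
  have hn : 3 ≤ n := by nlinarith
  have hbern : 1 + (n - 2) * ((cos θ)⁻¹ - 1) ≤ (cos θ)⁻¹ ^ (n - 2) := by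
    simpa using one_add_mul_self_le_rpow_one_add (s := (cos θ)⁻¹ - 1)
      (by linarith [inv_pos.2 hc]) (by linarith : 1 ≤ n - 2)
  have hsc : sin θ * cos θ ≤ (n - 2) * (1 - cos θ) := by
    have := mul_sin_mul_cos_le hθ hθ'
    have : (3 * π / 2 - 2 * θ) * (1 - cos θ) ≤ (n - 2) * θ * (1 - cos θ) := by
      gcongr
      · linarith [cos_le_one θ]
      · linarith
    nlinarith
  have hsin : 1 + sin θ ≤ (cos θ)⁻¹ ^ (n - 2) := by
    have : sin θ ≤ (n - 2) * ((cos θ)⁻¹ - 1) := by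
      rw [show (n - 2) * ((cos θ)⁻¹ - 1) = (n - 2) * (1 - cos θ) / cos θ by field_simp,
        le_div_iff₀ hc]
      exact hsc
    linarith
  calc cos θ ^ (n - 1) * (1 + sin θ) = cos θ * cos θ ^ (n - 2) * (1 + sin θ) := by
        rw [← rpow_one_add' hc.le (by linarith)]
        ring_nf
    _ ≤ cos θ * cos θ ^ (n - 2) * (cos θ)⁻¹ ^ (n - 2) := by gcongr
    _ = cos θ := by
        rw [inv_rpow hc.le, mul_assoc, mul_inv_cancel₀ (rpow_pos_of_pos hc _).ne', mul_one]

theorem sq_sub_two_mul_cos_le_of_mul_le_pi_div_two {r θ n : ℝ} (hr : 0 ≤ r) (hrc : r ≤ cos θ)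
    (hθ : 0 ≤ θ) (hn : 1 ≤ n) (hnθ : n * θ ≤ π / 2) :
    r ^ 2 - 2 * r * cos θ ≤ (r ^ n) ^ 2 - 2 * r ^ n * cos (n * θ) := by
  have hc : 0 ≤ cos θ := hr.trans hrc
  have hsub := sub_rpow_le_two_mul_sub_rpow (t := r ^ 2) (x := r * cos θ) (sq_nonneg r)
    (by nlinarith [cos_sq_le_one θ, mul_nonneg (sq_nonneg r) (sq_nonneg (cos θ))])
    (by nlinarith) (by nlinarith [cos_le_one θ]) hn
  rw [← rpow_pow_comm hr, mul_rpow hr hc] at hsub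
  nlinarith [mul_le_mul_of_nonneg_left (cos_mul_le_cos_rpow hθ hn hnθ) (rpow_nonneg hr n)]

theorem sq_sub_two_mul_le_of_three_pi_div_two_le {r θ n : ℝ} (hr : 0 ≤ r) (hrc : r ≤ cos θ)
    (hθ : 0 < θ) (hθ' : θ < π / 2) (hnθ : 3 * π / 2 ≤ n * θ) :
    r ^ 2 - 2 * r * cos θ ≤ (r ^ n) ^ 2 - 2 * r ^ n := by
  have hn : 1 ≤ n := by nlinarith [pi_gt_three]
  have hc : 0 < cos θ := cos_pos_of_mem_Ioo ⟨by linarith, hθ'⟩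
  have hs0 : 0 ≤ sin θ := sin_nonneg_of_nonneg_of_le_pi hθ.le (by linarith)
  set p := r ^ (n - 1) with hp
  have hp0 : 0 ≤ p := rpow_nonneg hr _
  have hpc : p ≤ cos θ ^ (n - 1) := rpow_le_rpow hr hrc (by linarith)
  have hp1 : p ≤ 1 := hpc.trans (rpow_le_one hc.le (cos_le_one θ) (by linarith))
  have hps : p * (1 + sin θ) ≤ cos θ :=
    (mul_le_mul_of_nonneg_right hpc (by linarith)).trans (cos_rpow_mul_one_add_sin_le hθ hθ' hnθ)
  -- `p` lies below the smaller root `(1 - sin θ) / cos θ` of `cos θ * X ^ 2 - 2 * X + cos θ`.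
  have hquad : 2 * p ≤ cos θ * (1 + p ^ 2) := by
    have hsc := sin_sq_add_cos_sq θ
    have hcp : cos θ * p ≤ 1 - sin θ := by
      nlinarith [mul_le_mul_of_nonneg_right hps (by linarith [sin_le_one θ] : 0 ≤ 1 - sin θ)]
    have : 0 ≤ cos θ * (cos θ * (1 + p ^ 2) - 2 * p) := by
      nlinarith [mul_nonneg (by linarith : 0 ≤ 1 - sin θ - cos θ * p)
        (by linarith : 0 ≤ 1 + sin θ - cos θ * p)]
    nlinarith [(mul_nonneg_iff_of_pos_left hc).1 this]
  have : r * (1 - p ^ 2) ≤ 2 * (cos θ - p) := by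
    nlinarith [mul_le_mul_of_nonneg_right hrc (by nlinarith : (0 : ℝ) ≤ 1 - p ^ 2)]
  rw [rpow_eq_mul_rpow_sub_one hr hn, ← hp]
  nlinarith [mul_le_mul_of_nonneg_left this hr]

theorem sq_sub_two_mul_cos_le {r θ n : ℝ} (hr : 0 ≤ r) (hrc : r ≤ cos θ) (hθ : 0 ≤ θ)
    (hθ' : θ < π / 2) (hn : 1 ≤ n) :
    r ^ 2 - 2 * r * cos θ ≤ (r ^ n) ^ 2 - 2 * r ^ n * cos (n * θ) := by
  have hrn : 0 ≤ r ^ n := rpow_nonneg hr n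
  rcases le_or_gt (n * θ) (π / 2) with h₁ | h₁
  · exact sq_sub_two_mul_cos_le_of_mul_le_pi_div_two hr hrc hθ hn h₁
  rcases le_or_gt (n * θ) (π + π / 2) with h₂ | h₂
  · have := cos_nonpos_of_pi_div_two_le_of_le h₁.le h₂
    nlinarith [mul_nonneg hrn (neg_nonneg.2 this)]
  · have hθ0 : 0 < θ := by nlinarith [pi_pos]
    have := sq_sub_two_mul_le_of_three_pi_div_two_le hr hrc hθ0 hθ' (n := n) (by linarith)
    nlinarith [mul_le_mul_of_nonneg_left (cos_le_one (n * θ)) hrn]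

theorem Complex.norm_sub_ofReal_sq (w : ℂ) (a : ℝ) :
    ‖w - a‖ ^ 2 = ‖w‖ ^ 2 - 2 * a * w.re + a ^ 2 := by
  simp only [Complex.sq_norm, Complex.normSq_sub, Complex.conj_ofReal, Complex.re_mul_ofReal,
    Complex.normSq_ofReal]
  ring

theorem Complex.norm_sub_one_sq (w : ℂ) : ‖w - 1‖ ^ 2 = ‖w‖ ^ 2 - 2 * w.re + 1 := by
  simpa using Complex.norm_sub_ofReal_sq w 1

theorem stmt13_general (z : ℂ) (hz : ‖z - 1/2‖ ≤ 1/2) (n : ℝ) (hn : 1 ≤ n) :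
    ‖z - 1‖ ≤ ‖z ^ (n : ℂ) - 1‖ := by
  set r := ‖z‖
  set θ := |Complex.arg z|
  have hre : z.re = r * cos θ := by rw [cos_abs, Complex.norm_mul_cos_arg]
  have hdisk : r ^ 2 ≤ z.re := by
    have h := Complex.norm_sub_ofReal_sq z (1 / 2)
    push_cast at h
    nlinarith [norm_nonneg (z - 1 / 2)]
  have hθ : θ < π / 2 := by
    refine Complex.abs_arg_lt_pi_div_two_iff.2 ?_
    rcases eq_or_ne z 0 with h | h
    · exact Or.inr h
    · exact Or.inl (by nlinarith [norm_pos_iff.2 h])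
  have hrc : r ≤ cos θ := by
    have := cos_nonneg_of_mem_Icc ⟨by linarith [abs_nonneg (Complex.arg z), pi_pos], hθ.le⟩
    nlinarith [norm_nonneg z]
  have hpow : (z ^ (n : ℂ)).re = r ^ n * cos (n * θ) := by
    rw [Complex.cpow_ofReal_re, ← cos_abs, abs_mul, abs_of_nonneg (by linarith : (0 : ℝ) ≤ n),
      mul_comm |Complex.arg z|]
  rw [← sq_le_sq₀ (norm_nonneg _) (norm_nonneg _), Complex.norm_sub_one_sq,
    Complex.norm_sub_one_sq, Complex.norm_cpow_real, hpow, hre]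
  linarith [sq_sub_two_mul_cos_le (norm_nonneg z) hrc (abs_nonneg _) hθ hn]

theorem stmt13 (z : ℂ) (hz : ‖z - 1/2‖ ≤ 1/2) (hz0 : z ≠ 0) (n : ℝ) (hn : 1 ≤ n) :
    ‖z - 1‖ ≤ ‖z ^ (n : ℂ) - 1‖ :=
  stmt13_general z hz n hn
end

section
/- For all real t with 0 < t < 1 and all real n > 3 such that t ≥ sin(2π/(n+1)) (in particular t > 2/(n-1)), the series inequality ∑_{k≥1} ((n-1)t^(2k)/(2k) - t^(2k-1)/(2k-1)) > 0 holds. -/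
open Real
theorem stmt14 (t n : ℝ) (ht1 : 0 < t) (ht2 : t < 1) (hn : 3 < n)
    (ht3 : sin (2 * π / (n + 1)) ≤ t) :
    0 < ∑' k : ℕ, ((n - 1) * t ^ (2 * (k + 1)) / (2 * (k + 1) : ℝ)
        - t ^ (2 * (k + 1) - 1) / ((2 * (k + 1) : ℝ) - 1)) := by
  have hn1 : (0:ℝ) < n - 1 := by linarith
  have hπ : (0:ℝ) < π := Real.pi_pos
  have hx0 : (0:ℝ) ≤ 2 * π / (n + 1) := by positivity
  have hx1 : 2 * π / (n + 1) ≤ π / 2 := by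
    rw [div_le_div_iff₀ (by linarith) (by norm_num)]
    nlinarith
  have hsin : 4 / (n + 1) ≤ sin (2 * π / (n + 1)) := by
    have h := Real.mul_le_sin hx0 hx1
    have h2 : 2 / π * (2 * π / (n + 1)) = 4 / (n + 1) := by
      field_simp; ring
    linarith [h2 ▸ h]
  have ht4 : 2 < (n - 1) * t := by
    have h1 : 4 / (n + 1) ≤ t := le_trans hsin ht3
    have h2 : 2 / (n - 1) < 4 / (n + 1) := by
      rw [div_lt_div_iff₀ hn1 (by linarith)]; nlinarith
    have h3 : 2 / (n - 1) < t := lt_of_lt_of_le h2 h1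
    calc 2 = (n - 1) * (2 / (n - 1)) := by field_simp
    _ < (n - 1) * t := mul_lt_mul_of_pos_left h3 hn1
  -- positivity of each term
  have hpos : ∀ k : ℕ, 0 < (n - 1) * t ^ (2 * (k + 1)) / (2 * (k + 1) : ℝ)
      - t ^ (2 * (k + 1) - 1) / ((2 * (k + 1) : ℝ) - 1) := by
    intro k
    have he1 : 2 * (k + 1) - 1 = 2 * k + 1 := by omega
    have he2 : 2 * (k + 1) = (2 * k + 1) + 1 := by omega
    rw [he1, he2, pow_succ]
    have hp : (0:ℝ) < t ^ (2 * k + 1) := pow_pos ht1 _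
    have hK : (0:ℝ) ≤ (k:ℝ) := Nat.cast_nonneg k
    have hd1 : (0:ℝ) < 2 * ((k:ℝ) + 1) := by linarith
    have hd2 : (0:ℝ) < 2 * ((k:ℝ) + 1) - 1 := by linarith
    rw [sub_pos, div_lt_div_iff₀ hd2 hd1]
    nlinarith [mul_pos hp (by linarith : (0:ℝ) < (n-1)*t - 2),
      mul_nonneg (mul_pos hp (by linarith : (0:ℝ) < (n-1)*t - 2)).le hK]
  -- summability
  have ht2' : t ^ 2 < 1 := by nlinarith
  have ht2'' : (0:ℝ) ≤ t ^ 2 := sq_nonneg t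
  have hgeo : Summable (fun k : ℕ => (t ^ 2) ^ k) :=
    summable_geometric_of_lt_one ht2'' ht2'
  have hg : Summable (fun k : ℕ => (n - 1) * t ^ (2 * (k + 1)) / (2 * (k + 1) : ℝ)) := by
    apply Summable.of_nonneg_of_le (fun k => by positivity)
      (fun k => ?_) (hgeo.mul_left (n - 1))
    have he : t ^ (2 * (k + 1)) = (t ^ 2) ^ k * t ^ 2 := by
      rw [← pow_mul, ← pow_add]; ring_nf
    have hd1 : (1:ℝ) ≤ 2 * ((k:ℝ) + 1) := by
      have : (0:ℝ) ≤ (k:ℝ) := Nat.cast_nonneg k; linarith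
    rw [he]
    have h1 : (n - 1) * ((t ^ 2) ^ k * t ^ 2) / (2 * ((k:ℝ) + 1))
        ≤ (n - 1) * ((t ^ 2) ^ k * t ^ 2) / 1 :=
      div_le_div_of_nonneg_left (by positivity) one_pos hd1
    have h2 : (n - 1) * ((t ^ 2) ^ k * t ^ 2) ≤ (n - 1) * (t ^ 2) ^ k := by
      have : (t ^ 2) ^ k * t ^ 2 ≤ (t ^ 2) ^ k * 1 :=
        mul_le_mul_of_nonneg_left ht2'.le (by positivity)
      nlinarith [pow_nonneg ht2'' k]
    push_cast
    calc (n - 1) * ((t ^ 2) ^ k * t ^ 2) / (2 * ((k:ℝ) + 1))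
        ≤ (n - 1) * ((t ^ 2) ^ k * t ^ 2) / 1 := h1
      _ = (n - 1) * ((t ^ 2) ^ k * t ^ 2) := by ring
      _ ≤ (n - 1) * (t ^ 2) ^ k := h2
  have hh : Summable (fun k : ℕ => t ^ (2 * (k + 1) - 1) / ((2 * (k + 1) : ℝ) - 1)) := by
    apply Summable.of_nonneg_of_le (fun k => ?_) (fun k => ?_) hgeo
    · have he1 : 2 * (k + 1) - 1 = 2 * k + 1 := by omega
      rw [he1]
      have hK : (0:ℝ) ≤ (k:ℝ) := Nat.cast_nonneg k
      apply div_nonneg (pow_nonneg ht1.le _)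
      push_cast
      linarith
    · have he1 : 2 * (k + 1) - 1 = 2 * k + 1 := by omega
      have he : t ^ (2 * k + 1) = (t ^ 2) ^ k * t := by
        rw [← pow_mul, ← pow_succ]
      rw [he1, he]
      have hK : (0:ℝ) ≤ (k:ℝ) := Nat.cast_nonneg k
      have hd2 : (1:ℝ) ≤ 2 * ((k:ℝ) + 1) - 1 := by linarith
      have h1 : (t ^ 2) ^ k * t / (2 * ((k:ℝ) + 1) - 1) ≤ (t ^ 2) ^ k * t / 1 :=
        div_le_div_of_nonneg_left (by positivity) one_pos hd2
      have h2 : (t ^ 2) ^ k * t ≤ (t ^ 2) ^ k :=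
        mul_le_of_le_one_right (by positivity) ht2.le
      push_cast
      calc (t ^ 2) ^ k * t / (2 * ((k:ℝ) + 1) - 1)
          ≤ (t ^ 2) ^ k * t / 1 := h1
        _ = (t ^ 2) ^ k * t := by ring
        _ ≤ (t ^ 2) ^ k := h2
  have hsum := hg.sub hh
  exact Summable.tsum_pos hsum (fun k => (hpos k).le) 0 (hpos 0)
end
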